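/- Let γ ≠ 0. The function σ(x) = (3/(2γ)) sech²(x/2) satisfies the KdV traveling wave equation -σ''(x) + σ(x) - γ σ(x)² = 0 for all x ∈ ℝ. Moreover, if v : ℝ → ℝ is twice continuously differentiable, even, not identically zero, tends to 0 as |x| → ∞, and satisfies -v''(x) + v(x) - γ v(x)² = 0 for all x, then v = σ. -/

import Mathlib

/-!
The profile equation for `σ` is a direct computation with `sinh² = cosh² - 1`.

For uniqueness, write the equation as the planar system `v' = w, w' = v - γ v²`, whose energy
`w²/2 - v²/2 + γ v³/3` is conserved. By the mean value theorem `w = v'` tends to `0` along a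
sequence going to `+∞`, where also `v → 0`, so the energy is `0`. Evenness gives `w(0) = 0`,
hence `v(0)² (3 - 2γ v(0)) = 0`: the orbit starts either at the rest point `0` or at
`(σ(0), σ'(0))`. The vector field is polynomial, hence locally Lipschitz, so uniqueness of
solutions of the planar system gives `v = 0` (excluded) or `v = σ`.
-/

open MeasureTheory Filter Topology

/-- The KdV solitary wave profile `σ(x) = (3/(2γ)) sech²(x/2)`. -/
noncomputable def sigma (γ : ℝ) (x : ℝ) : ℝ := 3 / (2 * γ) * ((Real.cosh (x / 2))⁻¹) ^ 2

noncomputable def sigma' (γ : ℝ) (x : ℝ) : ℝ :=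
  -(3 / (2 * γ)) * Real.sinh (x / 2) * (Real.cosh (x / 2))⁻¹ ^ 3

/-- The amplitude relation behind `σ'' = σ - γσ²`; for `γ = 0` both sides are `0`,
as `3 / 0 = 0`. -/
lemma mul_sq_three_div_two_mul (γ : ℝ) : γ * (3 / (2 * γ)) ^ 2 = 3 / 2 * (3 / (2 * γ)) := by
  rcases eq_or_ne γ 0 with rfl | hγ
  · simp
  · field_simp

lemma hasDerivAt_sinh_half (x : ℝ) :
    HasDerivAt (fun y => Real.sinh (y / 2)) (Real.cosh (x / 2) / 2) x := by
  simpa [div_eq_mul_inv, mul_comm] using ((hasDerivAt_id' x).div_const 2).sinh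

lemma hasDerivAt_inv_cosh_half (x : ℝ) :
    HasDerivAt (fun y => (Real.cosh (y / 2))⁻¹)
      (-Real.sinh (x / 2) * (Real.cosh (x / 2))⁻¹ ^ 2 / 2) x := by
  have h := ((hasDerivAt_id' x).div_const 2).cosh.fun_inv (Real.cosh_pos (x / 2)).ne'
  exact h.congr_deriv (by field_simp)

lemma hasDerivAt_sigma (γ x : ℝ) : HasDerivAt (sigma γ) (sigma' γ x) x := by
  refine (((hasDerivAt_inv_cosh_half x).fun_pow 2).const_mul (3 / (2 * γ))).congr_deriv ?_
  simp only [sigma']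
  ring

lemma hasDerivAt_sigma' (γ x : ℝ) :
    HasDerivAt (sigma' γ) (sigma γ x - γ * sigma γ x ^ 2) x := by
  have h := ((hasDerivAt_sinh_half x).const_mul (-(3 / (2 * γ)))).fun_mul
    ((hasDerivAt_inv_cosh_half x).fun_pow 3)
  refine h.congr_deriv ?_
  simp only [sigma, mul_pow, ← mul_assoc, mul_sq_three_div_two_mul]
  have hc := (Real.cosh_pos (x / 2)).ne'
  norm_num
  field_simp
  rw [Real.sinh_sq]
  ring

theorem sigma_travelingWave (γ x : ℝ) :
    -deriv (deriv (sigma γ)) x + sigma γ x - γ * sigma γ x ^ 2 = 0 := by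
  rw [funext fun y => (hasDerivAt_sigma γ y).deriv, (hasDerivAt_sigma' γ x).deriv]
  ring

lemma deriv_zero_of_even {f : ℝ → ℝ} (hf : ∀ x, f (-x) = f x) : deriv f 0 = 0 := by
  have h := deriv_comp_neg f 0
  simp only [hf, neg_zero] at h
  linarith

lemma exists_seq_tendsto_atTop_deriv_tendsto_zero {f f' : ℝ → ℝ}
    (hf : ∀ x, HasDerivAt f (f' x) x) {a : ℝ} (hlim : Tendsto f atTop (𝓝 a)) :
    ∃ ξ : ℕ → ℝ, Tendsto ξ atTop atTop ∧ Tendsto (f' ∘ ξ) atTop (𝓝 0) := by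
  have hslope (n : ℕ) : ∃ c ∈ Set.Ioo (n : ℝ) (n + 1), f' c = f (n + 1) - f n := by
    simpa using exists_hasDerivAt_eq_slope f f' (lt_add_one (n : ℝ))
      (fun x _ => (hf x).continuousAt.continuousWithinAt) (fun x _ => hf x)
  choose ξ hξ hξ' using hslope
  refine ⟨ξ, tendsto_atTop_mono (fun n => (hξ n).1.le) tendsto_natCast_atTop_atTop, ?_⟩
  have hnat : Tendsto (fun n : ℕ => f n) atTop (𝓝 a) := hlim.comp tendsto_natCast_atTop_atTop
  have hsucc : Tendsto (fun n : ℕ => f (n + 1)) atTop (𝓝 a) := by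
    simpa using (tendsto_add_atTop_iff_nat 1).mpr hnat
  simpa [Function.comp_def, hξ'] using hsucc.sub hnat

lemma energy_eq_of_hasDerivAt {v w g G : ℝ → ℝ} (hv : ∀ x, HasDerivAt v (w x) x)
    (hw : ∀ x, HasDerivAt w (g (v x)) x) (hG : ∀ y, HasDerivAt G (g y) y) (x y : ℝ) :
    w x ^ 2 / 2 - G (v x) = w y ^ 2 / 2 - G (v y) := by
  have hE (t : ℝ) : HasDerivAt (fun t => w t ^ 2 / 2 - G (v t)) 0 t := by
    refine ((((hw t).fun_pow 2).div_const 2).sub ((hG (v t)).comp t (hv t))).congr_deriv ?_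
    simp only [Nat.cast_ofNat]
    ring
  exact is_const_of_deriv_eq_zero (fun t => (hE t).differentiableAt) (fun t => (hE t).deriv) x y

theorem ODE_solution_unique_of_locallyLipschitz {E : Type*} [NormedAddCommGroup E]
    [NormedSpace ℝ E] {F : E → E} (hF : LocallyLipschitz F) {f g : ℝ → E}
    (hf : ∀ t, HasDerivAt f (F (f t)) t) (hg : ∀ t, HasDerivAt g (F (g t)) t) {t₀ : ℝ}
    (h₀ : f t₀ = g t₀) : f = g := by
  have hf_cont : Continuous f := continuous_iff_continuousAt.mpr fun t => (hf t).continuousAt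
  have hg_cont : Continuous g := continuous_iff_continuousAt.mpr fun t => (hg t).continuousAt
  have hopen : IsOpen {t | f t = g t} := by
    refine isOpen_iff_mem_nhds.mpr fun t (ht : f t = g t) => ?_
    obtain ⟨K, s, hs, hK⟩ := hF (f t)
    refine ODE_solution_unique_of_eventually (v := fun _ => F) (s := fun _ => s)
      (.of_forall fun _ => hK) ((Eventually.of_forall hf).and
        (hf_cont.continuousAt.preimage_mem_nhds hs)) ((Eventually.of_forall hg).and
        (hg_cont.continuousAt.preimage_mem_nhds (ht ▸ hs))) ht
  have hclopen : IsClopen {t | f t = g t} := ⟨isClosed_eq hf_cont hg_cont, hopen⟩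
  funext t
  exact (hclopen.eq_univ ⟨t₀, h₀⟩ ▸ Set.mem_univ t :)

def kdvField (γ : ℝ) (p : ℝ × ℝ) : ℝ × ℝ := (p.2, p.1 - γ * p.1 ^ 2)

lemma locallyLipschitz_kdvField (γ : ℝ) : LocallyLipschitz (kdvField γ) :=
  ContDiff.locallyLipschitz (𝕂 := ℝ) (by unfold kdvField; fun_prop)

lemma hasDerivAt_sigma_kdvField (γ t : ℝ) :
    HasDerivAt (fun t => (sigma γ t, sigma' γ t)) (kdvField γ (sigma γ t, sigma' γ t)) t :=
  (hasDerivAt_sigma γ t).prodMk (hasDerivAt_sigma' γ t)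

lemma hasDerivAt_deriv_of_travelingWave {γ : ℝ} {v : ℝ → ℝ} (hv : ContDiff ℝ 2 v)
    (heq : ∀ x, -deriv (deriv v) x + v x - γ * v x ^ 2 = 0) (x : ℝ) :
    HasDerivAt (deriv v) (v x - γ * v x ^ 2) x := by
  have hv' : ContDiff ℝ 1 (deriv v) := (contDiff_succ_iff_deriv (n := 1).mp hv).2.2
  rw [show v x - γ * v x ^ 2 = deriv (deriv v) x by linarith [heq x]]
  exact (hv'.differentiable one_ne_zero x).hasDerivAt

lemma travelingWave_energy_eq_zero {γ : ℝ} {v w : ℝ → ℝ} (hv : ∀ x, HasDerivAt v (w x) x)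
    (hw : ∀ x, HasDerivAt w (v x - γ * v x ^ 2) x) (hlim : Tendsto v atTop (𝓝 0)) (x : ℝ) :
    w x ^ 2 / 2 - (v x ^ 2 / 2 - γ * v x ^ 3 / 3) = 0 := by
  obtain ⟨ξ, hξ, hwξ⟩ := exists_seq_tendsto_atTop_deriv_tendsto_zero hv hlim
  have hpot (y : ℝ) : HasDerivAt (fun y => y ^ 2 / 2 - γ * y ^ 3 / 3) (y - γ * y ^ 2) y := by
    refine ((((hasDerivAt_id' y).fun_pow 2).div_const 2).sub
      ((((hasDerivAt_id' y).fun_pow 3).const_mul γ).div_const 3)).congr_deriv ?_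
    simp only [Nat.cast_ofNat]
    ring
  have hconst (n : ℕ) := energy_eq_of_hasDerivAt hv hw hpot x (ξ n)
  have hlimE : Tendsto (fun n => w (ξ n) ^ 2 / 2 - (v (ξ n) ^ 2 / 2 - γ * v (ξ n) ^ 3 / 3))
      atTop (𝓝 0) := by
    have hvξ := hlim.comp hξ
    simpa using ((hwξ.pow 2).div_const 2).sub (((hvξ.pow 2).div_const 2).sub
      (((hvξ.pow 3).const_mul γ).div_const 3))
  exact tendsto_nhds_unique (tendsto_const_nhds.congr hconst) hlimE

lemma eq_zero_or_eq_sigma_zero {γ a : ℝ} (h : a ^ 2 / 2 - γ * a ^ 3 / 3 = 0) :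
    a = 0 ∨ a = sigma γ 0 := by
  have h' : a ^ 2 * (3 - 2 * γ * a) = 0 := by linear_combination 6 * h
  rcases mul_eq_zero.mp h' with ha | ha
  · exact .inl (pow_eq_zero_iff two_ne_zero |>.mp ha)
  · right
    have hγ : 2 * γ ≠ 0 := by rintro h0; rw [h0] at ha; norm_num at ha
    simp only [sigma, zero_div, Real.cosh_zero, inv_one, one_pow, mul_one]
    rw [eq_div_iff hγ]
    linarith

theorem kdv_soliton_unique_general (γ : ℝ) :
    (∀ x : ℝ, -deriv (deriv (sigma γ)) x + sigma γ x - γ * (sigma γ x) ^ 2 = 0) ∧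
    (∀ v : ℝ → ℝ, ContDiff ℝ 2 v → (∀ x : ℝ, v (-x) = v x) → v ≠ 0 →
      Tendsto v atTop (nhds 0) → Tendsto v atBot (nhds 0) →
      (∀ x : ℝ, -deriv (deriv v) x + v x - γ * (v x) ^ 2 = 0) →
      v = sigma γ) := by
  refine ⟨sigma_travelingWave γ, fun v hv heven hv_ne hvtop _ heq => ?_⟩
  have hdv (x : ℝ) : HasDerivAt v (deriv v x) x := (hv.differentiable two_ne_zero x).hasDerivAt
  have hdw := hasDerivAt_deriv_of_travelingWave hv heq
  have hphase (t : ℝ) :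
      HasDerivAt (fun t => (v t, deriv v t)) (kdvField γ (v t, deriv v t)) t :=
    (hdv t).prodMk (hdw t)
  have hw0 : deriv v 0 = 0 := deriv_zero_of_even heven
  have hE := travelingWave_energy_eq_zero hdv hdw hvtop 0
  rw [hw0] at hE
  rcases eq_zero_or_eq_sigma_zero (by linarith : v 0 ^ 2 / 2 - γ * v 0 ^ 3 / 3 = 0) with h0 | h0
  · have hrest (t : ℝ) : HasDerivAt (fun _ => 0) (kdvField γ 0) t := by
      rw [show kdvField γ 0 = 0 by simp [kdvField]]
      exact hasDerivAt_const t 0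
    have h := ODE_solution_unique_of_locallyLipschitz (locallyLipschitz_kdvField γ) hphase hrest
      (t₀ := 0) (by simp [h0, hw0])
    exact absurd (funext fun x => congrArg Prod.fst (congrFun h x)) hv_ne
  · have h := ODE_solution_unique_of_locallyLipschitz (locallyLipschitz_kdvField γ) hphase
      (hasDerivAt_sigma_kdvField γ) (t₀ := 0) (by simp [h0, hw0, sigma'])
    exact funext fun x => congrArg Prod.fst (congrFun h x)

/-- `σ(x) = (3/(2γ)) sech²(x/2)` solves the KdV traveling wave equation
`-σ'' + σ - γσ² = 0`, and it is the unique even, nontrivial, decaying `C²` solution. -/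
theorem kdv_soliton_unique (γ : ℝ) (hγ : γ ≠ 0) :
    (∀ x : ℝ, -deriv (deriv (sigma γ)) x + sigma γ x - γ * (sigma γ x) ^ 2 = 0) ∧
    (∀ v : ℝ → ℝ, ContDiff ℝ 2 v → (∀ x : ℝ, v (-x) = v x) → v ≠ 0 →
      Tendsto v atTop (nhds 0) → Tendsto v atBot (nhds 0) →
      (∀ x : ℝ, -deriv (deriv v) x + v x - γ * (v x) ^ 2 = 0) →
      v = sigma γ) :=
  kdv_soliton_unique_general γ
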